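/- arXiv:math/0311490 — 2 statements merged into one kernel-verified Lean document; each statement's English description precedes it below -/
import Mathlib

section
/- Let n ≥ 3 and let α_n be the automorphism of the free metabelian group M_n defined on generators by g_i ↦ [[g_1,g_2]g_n, g_i]·g_i for i < n and g_n ↦ [g_1,g_2]·g_n. Let ᾱ_n be the ring endomorphism of R = ℤ[s_1^{±1},…,s_n^{±1}, t_1,…,t_n] fixing each s_i and defined by ᾱ_n(t_i) = s_n t_i + (1−s_i)((1−s_2)t_1 − (1−s_1)t_2 + t_n) for i < n and ᾱ_n(t_n) = (1−s_2)t_1 − (1−s_1)t_2 + t_n. Then for every g ∈ M_n, φ(α_n(g)) equals the matrix obtained by applying ᾱ_n entrywise to φ(g). -/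
open MvPolynomial
open scoped commutatorElement

abbrev LaurentRing (n : ℕ) := AddMonoidAlgebra ℤ (Fin n →₀ ℤ)

noncomputable def sVar (n : ℕ) (i : Fin n) : LaurentRing n :=
  AddMonoidAlgebra.single (Finsupp.single i 1) 1

noncomputable def sVarInv (n : ℕ) (i : Fin n) : LaurentRing n :=
  AddMonoidAlgebra.single (-Finsupp.single i 1) 1

lemma sVar_mul_sVarInv (n : ℕ) (i : Fin n) : sVar n i * sVarInv n i = 1 := by
  rw [sVar, sVarInv, AddMonoidAlgebra.single_mul_single, add_neg_cancel, one_mul,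
    AddMonoidAlgebra.one_def]

abbrev MagnusRing (n : ℕ) := MvPolynomial (Fin n) (LaurentRing n)

noncomputable def magnusUnit (n : ℕ) (i : Fin n) : (Matrix (Fin 2) (Fin 2) (MagnusRing n))ˣ where
  val := !![C (sVar n i), X i; 0, 1]
  inv := !![C (sVarInv n i), -(C (sVarInv n i) * X i); 0, 1]
  val_inv := by
    have h : (C (sVar n i) * C (sVarInv n i) : MagnusRing n) = 1 := by
      rw [← map_mul, sVar_mul_sVarInv, map_one]
    rw [Matrix.mul_fin_two, Matrix.one_fin_two]
    have e00 : (C (sVar n i) * C (sVarInv n i) + X i * 0 : MagnusRing n) = 1 := by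
      linear_combination h
    have e01 : (C (sVar n i) * -(C (sVarInv n i) * X i) + X i * 1 : MagnusRing n) = 0 := by
      linear_combination (-(X i) : MagnusRing n) * h
    rw [e00, e01]
    norm_num
  inv_val := by
    have h : (C (sVarInv n i) * C (sVar n i) : MagnusRing n) = 1 := by
      rw [← map_mul, mul_comm, sVar_mul_sVarInv, map_one]
    rw [Matrix.mul_fin_two, Matrix.one_fin_two]
    have e00 : (C (sVarInv n i) * C (sVar n i) + -(C (sVarInv n i) * X i) * 0 :
        MagnusRing n) = 1 := by
      linear_combination h
    have e01 : (C (sVarInv n i) * X i + -(C (sVarInv n i) * X i) * 1 : MagnusRing n) = 0 := by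
      ring
    rw [e00, e01]
    norm_num

section lowerTriv
variable {R : Type*} [CommRing R]

def lowerTriv (R : Type*) [CommRing R] : Subgroup (Matrix (Fin 2) (Fin 2) R)ˣ where
  carrier := {A | A.val 1 0 = 0 ∧ A.val 1 1 = 1}
  one_mem' := ⟨by simp, by simp⟩
  mul_mem' := by
    rintro A B ⟨ha0, ha1⟩ ⟨hb0, hb1⟩
    constructor <;>
      simp [Units.val_mul, Matrix.mul_apply, Fin.sum_univ_two, ha0, ha1, hb0, hb1]
  inv_mem' := by
    rintro A ⟨h0, h1⟩
    have key : ∀ j, A.inv 1 j = (1 : Matrix (Fin 2) (Fin 2) R) 1 j := by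
      intro j
      have h : (A.val * A.inv) 1 j = (1 : Matrix (Fin 2) (Fin 2) R) 1 j := by
        rw [A.val_inv]
      rwa [Matrix.mul_apply, Fin.sum_univ_two, h0, h1, zero_mul, one_mul, zero_add] at h
    exact ⟨by simpa using key 0, by simpa using key 1⟩

lemma mem_lowerTriv {A : (Matrix (Fin 2) (Fin 2) R)ˣ} :
    A ∈ lowerTriv R ↔ A.val 1 0 = 0 ∧ A.val 1 1 = 1 := Iff.rfl

lemma lowerTriv_mul_apply_zero_zero {A B : (Matrix (Fin 2) (Fin 2) R)ˣ}
    (hB : B ∈ lowerTriv R) :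
    (A * B).val 0 0 = A.val 0 0 * B.val 0 0 := by
  obtain ⟨hb0, -⟩ := mem_lowerTriv.mp hB
  simp [Units.val_mul, Matrix.mul_apply, Fin.sum_univ_two, hb0]

lemma lowerTriv_inv_zero_zero {A : (Matrix (Fin 2) (Fin 2) R)ˣ}
    (hA : A ∈ lowerTriv R) :
    A.val 0 0 * (A⁻¹).val 0 0 = 1 := by
  have h := lowerTriv_mul_apply_zero_zero (A := A) (B := A⁻¹) ((lowerTriv R).inv_mem hA)
  rw [mul_inv_cancel] at h
  simpa using h.symm

def upperUni (R : Type*) [CommRing R] : Subgroup (Matrix (Fin 2) (Fin 2) R)ˣ where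
  carrier := {A | A.val 0 0 = 1 ∧ A.val 1 0 = 0 ∧ A.val 1 1 = 1}
  one_mem' := ⟨by simp, by simp, by simp⟩
  mul_mem' := by
    rintro A B ⟨ha, ha0, ha1⟩ ⟨hb, hb0, hb1⟩
    refine ⟨?_, ?_, ?_⟩ <;>
      simp [Units.val_mul, Matrix.mul_apply, Fin.sum_univ_two, ha, ha0, ha1, hb, hb0, hb1]
  inv_mem' := by
    rintro A ⟨ha, ha0, ha1⟩
    have hmem : A ∈ lowerTriv R := ⟨ha0, ha1⟩
    obtain ⟨h0, h1⟩ := mem_lowerTriv.mp ((lowerTriv R).inv_mem hmem)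
    have h := lowerTriv_inv_zero_zero hmem
    rw [ha, one_mul] at h
    exact ⟨h, h0, h1⟩

lemma mem_upperUni {A : (Matrix (Fin 2) (Fin 2) R)ˣ} :
    A ∈ upperUni R ↔ A.val 0 0 = 1 ∧ A.val 1 0 = 0 ∧ A.val 1 1 = 1 := Iff.rfl

lemma upperUni_comm {A B : (Matrix (Fin 2) (Fin 2) R)ˣ}
    (hA : A ∈ upperUni R) (hB : B ∈ upperUni R) : A * B = B * A := by
  obtain ⟨ha, ha0, ha1⟩ := mem_upperUni.mp hA
  obtain ⟨hb, hb0, hb1⟩ := mem_upperUni.mp hB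
  ext : 1
  rw [Units.val_mul, Units.val_mul, Matrix.eta_fin_two A.val, Matrix.eta_fin_two B.val,
    ha, ha0, ha1, hb, hb0, hb1, Matrix.mul_fin_two, Matrix.mul_fin_two]
  ring_nf

lemma commutator_mem_upperUni {A B : (Matrix (Fin 2) (Fin 2) R)ˣ}
    (hA : A ∈ lowerTriv R) (hB : B ∈ lowerTriv R) : ⁅A, B⁆ ∈ upperUni R := by
  have hAi := (lowerTriv R).inv_mem hA
  have hBi := (lowerTriv R).inv_mem hB
  have hmem : ⁅A, B⁆ ∈ lowerTriv R :=
    Subgroup.mul_mem _ (Subgroup.mul_mem _ (Subgroup.mul_mem _ hA hB) hAi) hBi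
  obtain ⟨hc0, hc1⟩ := mem_lowerTriv.mp hmem
  refine mem_upperUni.mpr ⟨?_, hc0, hc1⟩
  show (A * B * A⁻¹ * B⁻¹).val 0 0 = 1
  rw [lowerTriv_mul_apply_zero_zero hBi, lowerTriv_mul_apply_zero_zero hAi,
    lowerTriv_mul_apply_zero_zero hB]
  have h1 := lowerTriv_inv_zero_zero hA
  have h2 := lowerTriv_inv_zero_zero hB
  calc A.val 0 0 * B.val 0 0 * (A⁻¹).val 0 0 * (B⁻¹).val 0 0
      = (A.val 0 0 * (A⁻¹).val 0 0) * (B.val 0 0 * (B⁻¹).val 0 0) := by ring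
    _ = 1 := by rw [h1, h2, one_mul]

lemma derivedSeries_two_map_eq_one {G : Type*} [Group G]
    (f : G →* (Matrix (Fin 2) (Fin 2) R)ˣ) (hf : ∀ g, f g ∈ lowerTriv R) :
    ∀ x ∈ derivedSeries G 2, f x = 1 := by
  have h1 : derivedSeries G 1 ≤ (upperUni R).comap f := by
    have e : derivedSeries G 1 = ⁅derivedSeries G 0, derivedSeries G 0⁆ :=
      derivedSeries_succ G 0
    rw [e, Subgroup.commutator_le]
    intro g _ h _
    simp only [Subgroup.mem_comap, map_commutatorElement]
    exact commutator_mem_upperUni (hf g) (hf h)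
  have h2 : derivedSeries G 2 ≤ f.ker := by
    have e : derivedSeries G 2 = ⁅derivedSeries G 1, derivedSeries G 1⁆ :=
      derivedSeries_succ G 1
    rw [e, Subgroup.commutator_le]
    intro g hg h hh
    rw [MonoidHom.mem_ker, map_commutatorElement, commutatorElement_eq_one_iff_mul_comm]
    exact upperUni_comm (h1 hg) (h1 hh)
  exact fun x hx => h2 hx

end lowerTriv

abbrev FreeMetabelian (n : ℕ) :=
  FreeGroup (Fin n) ⧸ derivedSeries (FreeGroup (Fin n)) 2

instance (n : ℕ) : (derivedSeries (FreeGroup (Fin n)) 2).Normal :=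
  derivedSeries_normal _ _

def gen (n : ℕ) (i : Fin n) : FreeMetabelian n :=
  QuotientGroup.mk (FreeGroup.of i)

/-- The Magnus representation on the free group. -/
noncomputable def magnusFree (n : ℕ) :
    FreeGroup (Fin n) →* (Matrix (Fin 2) (Fin 2) (MagnusRing n))ˣ :=
  FreeGroup.lift (magnusUnit n)

lemma magnusFree_mem_lowerTriv (n : ℕ) (g : FreeGroup (Fin n)) :
    magnusFree n g ∈ lowerTriv (MagnusRing n) := by
  refine FreeGroup.range_lift_le (s := lowerTriv (MagnusRing n)) ?_ ⟨g, rfl⟩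
  rintro A ⟨i, rfl⟩
  exact ⟨by simp [magnusUnit], by simp [magnusUnit]⟩

/-- The Magnus representation of the free metabelian group. -/
noncomputable def Magnus (n : ℕ) :
    FreeMetabelian n →* (Matrix (Fin 2) (Fin 2) (MagnusRing n))ˣ :=
  QuotientGroup.lift (derivedSeries (FreeGroup (Fin n)) 2) (magnusFree n)
    (derivedSeries_two_map_eq_one (magnusFree n) (magnusFree_mem_lowerTriv n))

/-- The Laurent monomial `s₁^{j₁} ⋯ sₙ^{jₙ}` with exponent vector `j`. -/
noncomputable def sMonomial (n : ℕ) (j : Fin n →₀ ℤ) : LaurentRing n :=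
  AddMonoidAlgebra.single j 1


/-- The polynomial `w = (1 - s₂) t₁ - (1 - s₁) t₂ + tₙ`. -/
noncomputable def wPoly (n : ℕ) (hn : 3 ≤ n) : MagnusRing n :=
  (1 - C (sVar n ⟨1, by omega⟩)) * X ⟨0, by omega⟩
    - (1 - C (sVar n ⟨0, by omega⟩)) * X ⟨1, by omega⟩ + X ⟨n - 1, by omega⟩

/-- The ring endomorphism `ᾱₙ` of `R = ℤ[s^{±1}, t]`: it fixes the Laurent coefficients
(hence each `sᵢ`), sends `tᵢ` to `sₙ tᵢ + (1 - sᵢ)((1 - s₂) t₁ - (1 - s₁) t₂ + tₙ)` for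
`i < n`, and sends `tₙ` to `(1 - s₂) t₁ - (1 - s₁) t₂ + tₙ`. -/
noncomputable def alphaBar (n : ℕ) (hn : 3 ≤ n) : MagnusRing n →+* MagnusRing n :=
  (MvPolynomial.aeval (R := LaurentRing n) (fun i : Fin n =>
      if (i : ℕ) < n - 1 then
        C (sVar n ⟨n - 1, by omega⟩) * X i + (1 - C (sVar n i)) * wPoly n hn
      else wPoly n hn) :
    MagnusRing n →ₐ[LaurentRing n] MagnusRing n).toRingHom

/-!
Both sides of the claim are homomorphisms `Mₙ → GL₂(R)` (the right one because `ᾱₙ` is a ring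
map), so they only need to agree on generators. All matrices involved are affine,
`[[a, b], [0, 1]]`. Since `αₙ(gᵢ) = c gᵢ c⁻¹` with `c = [g₁, g₂] gₙ`, and
`φ(c) = [[sₙ, w], [0, 1]]` with `w = (1 - s₂) t₁ - (1 - s₁) t₂ + tₙ`, conjugating
`φ(gᵢ) = [[sᵢ, tᵢ], [0, 1]]` by `φ(c)` gives `[[sᵢ, sₙ tᵢ + (1 - sᵢ) w], [0, 1]]`, which is
`ᾱₙ(φ(gᵢ))`.
-/

section affineUnit
variable {S T : Type*} [CommRing S] [CommRing T]

noncomputable def affineUnit (a : Sˣ) (b : S) : (Matrix (Fin 2) (Fin 2) S)ˣ where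
  val := !![(a : S), b; 0, 1]
  inv := !![(a⁻¹ : Sˣ), -(a⁻¹ * b : S); 0, 1]
  val_inv := by ext i j; fin_cases i <;> fin_cases j <;> simp
  inv_val := by ext i j; fin_cases i <;> fin_cases j <;> simp

lemma coe_affineUnit (a : Sˣ) (b : S) :
    (affineUnit a b : Matrix (Fin 2) (Fin 2) S) = !![(a : S), b; 0, 1] := rfl

lemma affineUnit_mul (a c : Sˣ) (b d : S) :
    affineUnit a b * affineUnit c d = affineUnit (a * c) (a * d + b) := by
  ext i j; fin_cases i <;> fin_cases j <;> simp [coe_affineUnit]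

lemma affineUnit_inv (a : Sˣ) (b : S) :
    (affineUnit a b)⁻¹ = affineUnit a⁻¹ (-(a⁻¹ * b : S)) := Units.ext rfl

lemma affineUnit_commutator (a c : Sˣ) (b d : S) :
    ⁅affineUnit a b, affineUnit c d⁆ = affineUnit 1 ((1 - c) * b - (1 - a) * d) := by
  rw [commutatorElement_def, affineUnit_inv, affineUnit_inv, affineUnit_mul, affineUnit_mul,
    affineUnit_mul]
  congr 1
  · rw [mul_right_comm, mul_inv_cancel_right, mul_inv_cancel]
  · push_cast
    linear_combination (-(c * ↑c⁻¹ * d) - c * b) * a.mul_inv - d * c.mul_inv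

lemma affineUnit_conj (a c : Sˣ) (b d : S) :
    affineUnit a b * affineUnit c d * (affineUnit a b)⁻¹ =
      affineUnit c (a * d + (1 - c) * b) := by
  rw [affineUnit_inv, affineUnit_mul, affineUnit_mul]
  congr 1
  · rw [mul_right_comm, mul_inv_cancel, one_mul]
  · push_cast
    linear_combination (-(c * b)) * a.mul_inv

lemma map_affineUnit (f : S →+* T) (a : Sˣ) (b : S) :
    Units.map f.mapMatrix.toMonoidHom (affineUnit a b) =
      affineUnit (Units.map f.toMonoidHom a) (f b) := by
  ext i j; fin_cases i <;> fin_cases j <;> simp [coe_affineUnit]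

end affineUnit

lemma FreeMetabelian.hom_ext {n : ℕ} {G : Type*} [Group G] {f g : FreeMetabelian n →* G}
    (h : ∀ i, f (gen n i) = g (gen n i)) : f = g :=
  QuotientGroup.monoidHom_ext _ (FreeGroup.ext_hom _ _ h)

noncomputable def sUnit (n : ℕ) (i : Fin n) : (MagnusRing n)ˣ where
  val := C (sVar n i)
  inv := C (sVarInv n i)
  val_inv := by rw [← map_mul, sVar_mul_sVarInv, map_one]
  inv_val := by rw [← map_mul, mul_comm, sVar_mul_sVarInv, map_one]

lemma Magnus_gen (n : ℕ) (i : Fin n) :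
    Magnus n (gen n i) = affineUnit (sUnit n i) (X i) :=
  (FreeGroup.lift_apply_of (f := magnusUnit n)).trans (Units.ext rfl)

lemma Magnus_commutator_mul_gen (n : ℕ) (hn : 3 ≤ n) :
    Magnus n (⁅gen n ⟨0, by omega⟩, gen n ⟨1, by omega⟩⁆ * gen n ⟨n - 1, by omega⟩) =
      affineUnit (sUnit n ⟨n - 1, by omega⟩) (wPoly n hn) := by
  rw [map_mul, map_commutatorElement, Magnus_gen, Magnus_gen, Magnus_gen,
    affineUnit_commutator, affineUnit_mul, one_mul, wPoly]
  congr 1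
  simp only [sUnit, Units.val_one]
  ring

lemma alphaBar_C (n : ℕ) (hn : 3 ≤ n) (a : LaurentRing n) :
    alphaBar n hn (C a) = C a :=
  MvPolynomial.aeval_C _ a

lemma units_map_alphaBar_sUnit (n : ℕ) (hn : 3 ≤ n) (i : Fin n) :
    Units.map (alphaBar n hn).toMonoidHom (sUnit n i) = sUnit n i :=
  Units.ext (alphaBar_C n hn _)

lemma alphaBar_X (n : ℕ) (hn : 3 ≤ n) (i : Fin n) :
    alphaBar n hn (X i) =
      if (i : ℕ) < n - 1 then
        C (sVar n ⟨n - 1, by omega⟩) * X i + (1 - C (sVar n i)) * wPoly n hn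
      else wPoly n hn :=
  MvPolynomial.aeval_X _ i

/-- For the automorphism `αₙ` of the free metabelian group (defined on generators by
`gᵢ ↦ [[g₁,g₂]gₙ, gᵢ]·gᵢ` for `i < n` and `gₙ ↦ [g₁,g₂]·gₙ`), the Magnus representation
satisfies `φ(αₙ g) = ᾱₙ(φ g)` entrywise, where `ᾱₙ` is the ring endomorphism `alphaBar`. -/
theorem magnus_of_alpha (n : ℕ) (hn : 3 ≤ n) (α : FreeMetabelian n ≃* FreeMetabelian n)
    (hα₁ : ∀ i : Fin n, (i : ℕ) < n - 1 →
      α (gen n i) =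
        ⁅⁅gen n ⟨0, by omega⟩, gen n ⟨1, by omega⟩⁆ * gen n ⟨n - 1, by omega⟩, gen n i⁆ *
          gen n i)
    (hα₂ : α (gen n ⟨n - 1, by omega⟩) =
      ⁅gen n ⟨0, by omega⟩, gen n ⟨1, by omega⟩⁆ * gen n ⟨n - 1, by omega⟩) :
    ∀ g : FreeMetabelian n,
      (Magnus n (α g) : Matrix (Fin 2) (Fin 2) (MagnusRing n)) =
        (Magnus n g : Matrix (Fin 2) (Fin 2) (MagnusRing n)).map (alphaBar n hn) := by
  suffices (Magnus n).comp α.toMonoidHom =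
      (Units.map (alphaBar n hn).mapMatrix.toMonoidHom).comp (Magnus n) from
    fun g => congr_arg Units.val (DFunLike.congr_fun this g)
  refine FreeMetabelian.hom_ext fun i => ?_
  simp only [MonoidHom.comp_apply, MulEquiv.coe_toMonoidHom, Magnus_gen, map_affineUnit,
    units_map_alphaBar_sUnit, alphaBar_X]
  split_ifs with hi
  · rw [hα₁ i hi, commutatorElement_def, inv_mul_cancel_right, map_mul, map_mul, map_inv,
      Magnus_commutator_mul_gen n hn, Magnus_gen, affineUnit_conj]
    rfl
  · have hi' : i = ⟨n - 1, by omega⟩ := Fin.ext (by dsimp only; omega)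
    rw [hi', hα₂, Magnus_commutator_mul_gen n hn]
end

section
/- Let n ≥ 3 and let ᾱ_n be the ring endomorphism of R = ℤ[s_1^{±1},…,s_n^{±1}, t_1,…,t_n] fixing each s_i and defined by ᾱ_n(t_i) = s_n t_i + (1−s_i)((1−s_2)t_1 − (1−s_1)t_2 + t_n) for i < n and ᾱ_n(t_n) = (1−s_2)t_1 − (1−s_1)t_2 + t_n. If g ∈ M_n is such that the matrix φ(g) is fixed entrywise by ᾱ_n, then φ(g) is the identity matrix. -/
open MvPolynomial
open scoped commutatorElement

/-!
By induction on words, the Magnus matrix of `g` is `[[s^m, ∑ cⱼ tⱼ], [0, 1]]` with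
`∑ cⱼ (sⱼ - 1) = s^m - 1`. If `ᾱₙ` fixes `∑ cⱼ tⱼ`, comparing coefficients of the `tⱼ` gives
`cⱼ = sₙ cⱼ + λ wⱼ` for `j < n` and `cₙ = λ`, where `λ` is the coefficient of
`w = ∑ wⱼ tⱼ` in `ᾱₙ (∑ cⱼ tⱼ)`. The Fox formula becomes `s^m - 1 = λ (sₙ - 1)`, and the
`t₁`-equation `(sₙ - 1) c₁ = (s₂ - 1) λ` shows that `λ` has augmentation zero. Expanding to
first order, `s^m ↦ 1 + m ε`, the first identity gives `m = aug(λ) eₙ = 0`. So `λ (sₙ - 1) = 0`,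
and since the Laurent ring is a domain, `λ = 0` and then every `cⱼ = 0`.
-/

namespace TrivSqZeroExt

lemma mul_inr_eq_inr_fst_smul {R M : Type*} [Semiring R] [AddCommMonoid M] [Module R M]
    [Module Rᵐᵒᵖ M] (x : TrivSqZeroExt R M) (m : M) :
    x * inr m = inr (x.fst • m) := by
  ext <;> simp

end TrivSqZeroExt

namespace AddMonoidAlgebra

variable {R G M : Type*} [CommRing R] [AddMonoid G] [AddCommGroup M] [Module R M]
  [Module Rᵐᵒᵖ M] [IsCentralScalar R M]

/-- The first component of this map is the augmentation. -/
noncomputable def liftTrivSqZeroExt (f : G →+ M) :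
    AddMonoidAlgebra R G →ₐ[R] TrivSqZeroExt R M :=
  lift R (TrivSqZeroExt R M) G
    { toFun := fun x => 1 + TrivSqZeroExt.inr (f x.toAdd)
      map_one' := by simp
      map_mul' := fun x y => by
        simp only [toAdd_mul, map_add, TrivSqZeroExt.inr_add]
        linear_combination (TrivSqZeroExt.inr_mul_inr R (f x.toAdd) (f y.toAdd)).symm }

lemma liftTrivSqZeroExt_single_one (f : G →+ M) (g : G) :
    liftTrivSqZeroExt f (single g (1 : R)) = 1 + TrivSqZeroExt.inr (f g) := by
  rw [liftTrivSqZeroExt, lift_single, one_smul]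
  rfl

end AddMonoidAlgebra

section Laurent

variable {n : ℕ}

lemma sMonomial_zero : sMonomial n 0 = 1 := rfl

lemma sMonomial_add (a b : Fin n →₀ ℤ) :
    sMonomial n (a + b) = sMonomial n a * sMonomial n b := by
  rw [sMonomial, sMonomial, sMonomial, AddMonoidAlgebra.single_mul_single, one_mul]

lemma sMonomial_mul_sMonomial_neg (m : Fin n →₀ ℤ) : sMonomial n m * sMonomial n (-m) = 1 := by
  rw [← sMonomial_add, add_neg_cancel, sMonomial_zero]

lemma sMonomial_single (i : Fin n) : sMonomial n (Finsupp.single i 1) = sVar n i := rfl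

lemma sVar_sub_one_ne_zero (i : Fin n) : sVar n i - 1 ≠ 0 := by
  rw [sub_ne_zero, ← sMonomial_single, ← sMonomial_zero, sMonomial, sMonomial, Ne,
    AddMonoidAlgebra.single_left_inj one_ne_zero]
  exact Finsupp.single_ne_zero.mpr one_ne_zero

noncomputable abbrev laurentExpand (n : ℕ) :
    LaurentRing n →ₐ[ℤ] TrivSqZeroExt ℤ (Fin n →₀ ℤ) :=
  AddMonoidAlgebra.liftTrivSqZeroExt (AddMonoidHom.id _)

lemma laurentExpand_sMonomial_sub_one (m : Fin n →₀ ℤ) :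
    laurentExpand n (sMonomial n m - 1) = TrivSqZeroExt.inr m := by
  rw [map_sub, map_one, sMonomial, AddMonoidAlgebra.liftTrivSqZeroExt_single_one,
    AddMonoidHom.id_apply, add_sub_cancel_left]

lemma laurentExpand_sVar_sub_one (i : Fin n) :
    laurentExpand n (sVar n i - 1) = TrivSqZeroExt.inr (Finsupp.single i 1) :=
  laurentExpand_sMonomial_sub_one _

/-- `hlam` puts `lam` in the augmentation ideal, and `hm` read to first order then says
`m = aug(lam) • eᵢ = 0`. -/
lemma eq_zero_of_sMonomial_sub_one_eq_mul {m : Fin n →₀ ℤ} {lam mu : LaurentRing n}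
    {i j k : Fin n} (hjk : j ≠ k)
    (hm : sMonomial n m - 1 = lam * (sVar n i - 1))
    (hlam : (sVar n k - 1) * mu = (sVar n j - 1) * lam) : m = 0 := by
  have haug : (laurentExpand n lam).fst = 0 := by
    have h := congrArg (fun x => (laurentExpand n x).snd j) hlam
    simpa [laurentExpand_sVar_sub_one, mul_comm _ (TrivSqZeroExt.inr _),
      TrivSqZeroExt.mul_inr_eq_inr_fst_smul, Finsupp.single_apply, hjk] using h.symm
  have h := congrArg (laurentExpand n) hm
  rw [laurentExpand_sMonomial_sub_one, map_mul, laurentExpand_sVar_sub_one,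
    TrivSqZeroExt.mul_inr_eq_inr_fst_smul, haug, zero_smul] at h
  exact TrivSqZeroExt.inr_injective h

end Laurent

namespace MvPolynomial

variable {σ R : Type*} [Fintype σ] [CommSemiring R]

noncomputable abbrev linearForm : (σ → R) →ₗ[R] MvPolynomial σ R :=
  Fintype.linearCombination R X

lemma linearForm_apply (c : σ → R) : linearForm c = ∑ i, C (c i) * X i := by
  simp [Fintype.linearCombination_apply, smul_eq_C_mul]

lemma coeff_single_one_linearForm [DecidableEq σ] (c : σ → R) (k : σ) :
    coeff (Finsupp.single k 1) (linearForm c) = c k := by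
  simp [linearForm_apply, coeff_sum, coeff_X, Finsupp.single_left_inj one_ne_zero]

end MvPolynomial

lemma Matrix.affine_mul_affine {R : Type*} [CommRing R] (a b a' b' : R) :
    !![a, b; 0, 1] * !![a', b'; 0, 1] = !![a * a', a * b' + b; 0, 1] := by
  simp

/-- `∑ cⱼ (sⱼ - 1) = s^m - 1` is the fundamental formula of Fox calculus. -/
noncomputable def foxMatrices (n : ℕ) : Subgroup (Matrix (Fin 2) (Fin 2) (MagnusRing n))ˣ where
  carrier := {A | ∃ (m : Fin n →₀ ℤ) (c : Fin n → LaurentRing n),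
    (A : Matrix (Fin 2) (Fin 2) (MagnusRing n)) = !![C (sMonomial n m), linearForm c; 0, 1] ∧
    ∑ j, c j * (sVar n j - 1) = sMonomial n m - 1}
  one_mem' := ⟨0, 0, by simp [sMonomial_zero, Matrix.one_fin_two], by simp [sMonomial_zero]⟩
  mul_mem' := by
    rintro A B ⟨m, c, hA, hc⟩ ⟨m', c', hB, hc'⟩
    refine ⟨m + m', sMonomial n m • c' + c, ?_, ?_⟩
    · rw [Units.val_mul, hA, hB, Matrix.affine_mul_affine, map_add, map_smul, smul_eq_C_mul,
        sMonomial_add, map_mul]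
    · simp only [Pi.add_apply, Pi.smul_apply, smul_eq_mul, add_mul, Finset.sum_add_distrib,
        mul_assoc, ← Finset.mul_sum, hc, hc', sMonomial_add]
      ring
  inv_mem' := by
    rintro A ⟨m, c, hA, hc⟩
    have hunit := sMonomial_mul_sMonomial_neg m
    refine ⟨-m, -(sMonomial n (-m) • c), Units.inv_eq_of_mul_eq_one_right ?_, ?_⟩
    · have hCunit : C (sMonomial n m) * C (sMonomial n (-m)) = (1 : MagnusRing n) := by
        rw [← map_mul, hunit, map_one]
      have h01 : C (sMonomial n m) * linearForm (-(sMonomial n (-m) • c)) + linearForm c = 0 := by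
        rw [map_neg, map_smul, smul_eq_C_mul]
        linear_combination (-linearForm c) * hCunit
      rw [hA, Matrix.affine_mul_affine, hCunit, h01, Matrix.one_fin_two]
    · simp only [Pi.neg_apply, Pi.smul_apply, smul_eq_mul, neg_mul, mul_assoc,
        Finset.sum_neg_distrib, ← Finset.mul_sum, hc]
      linear_combination -hunit

lemma magnus_mem_foxMatrices (n : ℕ) (g : FreeMetabelian n) : Magnus n g ∈ foxMatrices n := by
  obtain ⟨x, rfl⟩ := QuotientGroup.mk_surjective g
  refine FreeGroup.range_lift_le (s := foxMatrices n) ?_ ⟨x, rfl⟩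
  rintro A ⟨i, rfl⟩
  refine ⟨Finsupp.single i 1, Pi.single i 1, ?_, ?_⟩
  · simp [magnusUnit, sMonomial_single]
  · simp [Pi.single_apply, sMonomial_single]

section alphaBar

variable {n : ℕ} (hn : 3 ≤ n)

noncomputable def alphaBarWeight (c : Fin n → LaurentRing n) : LaurentRing n :=
  ∑ j : Fin n, c j * if (j : ℕ) < n - 1 then 1 - sVar n j else 1

lemma alphaBar_linearForm (c : Fin n → LaurentRing n) :
    alphaBar n hn (linearForm c) =
      C (sVar n ⟨n - 1, by omega⟩) *
          linearForm (fun j : Fin n => if (j : ℕ) < n - 1 then c j else 0)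
        + C (alphaBarWeight c) * wPoly n hn := by
  simp only [linearForm_apply, alphaBarWeight, map_sum, map_mul, Finset.mul_sum,
    Finset.sum_mul, ← Finset.sum_add_distrib]
  refine Finset.sum_congr rfl fun j _ => ?_
  simp only [alphaBar, AlgHom.toRingHom_eq_coe, RingHom.coe_coe, aeval_C, aeval_X,
    MvPolynomial.algebraMap_eq]
  split_ifs <;> simp only [map_sub, map_one, map_zero] <;> ring

lemma coeff_wPoly_zero :
    coeff (Finsupp.single ⟨0, by omega⟩ 1) (wPoly n hn) = 1 - sVar n ⟨1, by omega⟩ := by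
  have : n - 1 ≠ 0 := by omega
  simp [wPoly, sub_mul, coeff_C_mul, coeff_X, Finsupp.single_left_inj, Fin.ext_iff, this]

lemma coeff_wPoly_last :
    coeff (Finsupp.single ⟨n - 1, by omega⟩ 1) (wPoly n hn) = 1 := by
  have : 0 ≠ n - 1 ∧ 1 ≠ n - 1 := by omega
  simp [wPoly, sub_mul, coeff_C_mul, coeff_X, Finsupp.single_left_inj, Fin.ext_iff, this]

lemma coeff_eq_of_alphaBar_linearForm_eq {c : Fin n → LaurentRing n}
    (hc : alphaBar n hn (linearForm c) = linearForm c) (k : Fin n) :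
    c k = sVar n ⟨n - 1, by omega⟩ * (if (k : ℕ) < n - 1 then c k else 0)
      + alphaBarWeight c * coeff (Finsupp.single k 1) (wPoly n hn) := by
  have h := congrArg (coeff (Finsupp.single k 1)) hc
  rwa [alphaBar_linearForm, coeff_add, coeff_C_mul, coeff_C_mul, coeff_single_one_linearForm,
    coeff_single_one_linearForm, eq_comm] at h

lemma sMonomial_sub_one_eq_alphaBarWeight_mul {m : Fin n →₀ ℤ} {c : Fin n → LaurentRing n}
    (hfox : ∑ j, c j * (sVar n j - 1) = sMonomial n m - 1)
    (hlast : c ⟨n - 1, by omega⟩ = alphaBarWeight c) :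
    sMonomial n m - 1 = alphaBarWeight c * (sVar n ⟨n - 1, by omega⟩ - 1) := by
  have hsum : ∑ j, c j * (sVar n j - 1) + alphaBarWeight c =
      c ⟨n - 1, by omega⟩ * sVar n ⟨n - 1, by omega⟩ := by
    rw [alphaBarWeight, ← Finset.sum_add_distrib, Finset.sum_eq_single ⟨n - 1, by omega⟩]
    · simp only [lt_irrefl, if_false]
      ring
    · intro j _ hj
      have : (j : ℕ) < n - 1 := by
        have := j.isLt
        have : (j : ℕ) ≠ n - 1 := fun h => hj (Fin.ext h)
        omega
      rw [if_pos this]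
      ring
    · simp
  linear_combination hsum - hfox + (sVar n ⟨n - 1, by omega⟩) * hlast

lemma eq_zero_of_alphaBar_linearForm_eq {m : Fin n →₀ ℤ} {c : Fin n → LaurentRing n}
    (hfox : ∑ j, c j * (sVar n j - 1) = sMonomial n m - 1)
    (hc : alphaBar n hn (linearForm c) = linearForm c) : m = 0 ∧ c = 0 := by
  have hrel := coeff_eq_of_alphaBar_linearForm_eq hn hc
  have hlast : c ⟨n - 1, by omega⟩ = alphaBarWeight c := by
    simpa [coeff_wPoly_last] using hrel ⟨n - 1, by omega⟩
  have hm := sMonomial_sub_one_eq_alphaBarWeight_mul hn hfox hlast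
  have h0 : (sVar n ⟨n - 1, by omega⟩ - 1) * c ⟨0, by omega⟩ =
      (sVar n ⟨1, by omega⟩ - 1) * alphaBarWeight c := by
    have h := hrel ⟨0, by omega⟩
    rw [if_pos (by simp only; omega), coeff_wPoly_zero] at h
    linear_combination -h
  have hm0 : m = 0 :=
    eq_zero_of_sMonomial_sub_one_eq_mul (by simp only [ne_eq, Fin.mk.injEq]; omega) hm h0
  have hweight : alphaBarWeight c = 0 := by
    rw [hm0, sMonomial_zero, sub_self, eq_comm, mul_eq_zero] at hm
    exact hm.resolve_right (sVar_sub_one_ne_zero _)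
  refine ⟨hm0, funext fun k => ?_⟩
  have hk := hrel k
  rw [hweight, zero_mul, add_zero] at hk
  split_ifs at hk
  · have h : (sVar n ⟨n - 1, by omega⟩ - 1) * c k = 0 := by linear_combination -hk
    exact (mul_eq_zero.mp h).resolve_left (sVar_sub_one_ne_zero _)
  · simpa using hk

end alphaBar

/-- If the Magnus matrix of `g` is fixed entrywise by `ᾱₙ`, then it is the identity
matrix. -/
theorem magnus_matrix_fixed_by_alphaBar_eq_one (n : ℕ) (hn : 3 ≤ n) (g : FreeMetabelian n)
    (hfix : (Magnus n g : Matrix (Fin 2) (Fin 2) (MagnusRing n)).map (alphaBar n hn) =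
      (Magnus n g : Matrix (Fin 2) (Fin 2) (MagnusRing n))) :
    (Magnus n g : Matrix (Fin 2) (Fin 2) (MagnusRing n)) = 1 := by
  obtain ⟨m, c, hg, hfox⟩ := magnus_mem_foxMatrices n g
  have hc : alphaBar n hn (linearForm c) = linearForm c := by
    simpa [hg] using congrFun (congrFun hfix 0) 1
  obtain ⟨rfl, rfl⟩ := eq_zero_of_alphaBar_linearForm_eq hn hfox hc
  rw [hg, sMonomial_zero, map_one, map_zero, Matrix.one_fin_two]
end
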